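/- Let R be an SDT ring. Then for every a ∈ R, the element a − a³ belongs to Δ(R). -/
import Mathlib

/-- `Δ(R) = {x ∈ R : x + u ∈ U(R) for every u ∈ U(R)}`. -/
def Delta (R : Type*) [Ring R] : Set R :=
  {x : R | ∀ u : R, IsUnit u → IsUnit (x + u)}

/-- A ring `R` is a strongly Δ tripotent (SDT) ring if every `a ∈ R` can be written
`a = e + d` with `e³ = e`, `d ∈ Δ(R)` and `ed = de`. -/
def IsSDTRing (R : Type*) [Ring R] : Prop :=
  ∀ a : R, ∃ e d : R, e ^ 3 = e ∧ d ∈ Delta R ∧ e * d = d * e ∧ a = e + d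

section DeltaLemmas

variable {R : Type*} [Ring R]

lemma delta_add {x y : R} (hx : x ∈ Delta R) (hy : y ∈ Delta R) : x + y ∈ Delta R := by
  intro u hu
  rw [add_assoc]
  exact hx _ (hy u hu)

lemma delta_neg {x : R} (hx : x ∈ Delta R) : -x ∈ Delta R := by
  intro u hu
  have h := (hx (-u) hu.neg).neg
  rwa [neg_add, neg_neg] at h

lemma delta_mul_unit {x u : R} (hx : x ∈ Delta R) (hu : IsUnit u) : x * u ∈ Delta R := by
  obtain ⟨U, rfl⟩ := hu
  intro v hv
  have h1 : IsUnit (x + v * ↑U⁻¹) := hx _ (hv.mul U⁻¹.isUnit)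
  have h2 := h1.mul U.isUnit
  rwa [add_mul, mul_assoc, Units.inv_mul, mul_one] at h2

lemma delta_unit_mul {u x : R} (hu : IsUnit u) (hx : x ∈ Delta R) : u * x ∈ Delta R := by
  obtain ⟨U, rfl⟩ := hu
  intro v hv
  have h1 : IsUnit (x + ↑U⁻¹ * v) := hx _ (U⁻¹.isUnit.mul hv)
  have h2 := U.isUnit.mul h1
  rwa [mul_add, ← mul_assoc, Units.mul_inv, one_mul] at h2

lemma delta_mul {x y : R} (hx : x ∈ Delta R) (hy : y ∈ Delta R) : x * y ∈ Delta R := by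
  have h1 : IsUnit (x + -1) := hx (-1) (IsUnit.neg isUnit_one)
  have h2 : (x + -1) * y ∈ Delta R := delta_unit_mul h1 hy
  have h3 := delta_add h2 hy
  rwa [show (x + -1) * y + y = x * y from by noncomm_ring] at h3

/-- For a tripotent `e` and a unit `v` commuting with `e`, `e*v + (1 - e*e)` is a unit. -/
lemma glue_isUnit {e v : R} (he : e ^ 3 = e) (hv : IsUnit v) (hc : e * v = v * e) :
    IsUnit (e * v + (1 - e * e)) := by
  obtain ⟨U, rfl⟩ := hv
  have hC : Commute e (U : R) := hc
  have hCw : Commute e ((U⁻¹ : Rˣ) : R) := hC.units_inv_right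
  have s3 : e * (e * e) = e := by
    calc e * (e * e) = e ^ 3 := by noncomm_ring
    _ = e := he
  have s3t : ∀ t : R, e * (e * (e * t)) = e * t := by
    intro t
    calc e * (e * (e * t)) = (e * (e * e)) * t := by simp only [mul_assoc]
    _ = e * t := by rw [s3]
  have c1 : (U : R) * e = e * U := hC.symm.eq
  have c2 : ∀ t : R, (U : R) * (e * t) = e * ((U : R) * t) := fun t => by
    rw [← mul_assoc, c1, mul_assoc]
  have c3 : ((U⁻¹ : Rˣ) : R) * e = e * ((U⁻¹ : Rˣ) : R) := hCw.symm.eq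
  have c4 : ∀ t : R, ((U⁻¹ : Rˣ) : R) * (e * t) = e * (((U⁻¹ : Rˣ) : R) * t) := fun t => by
    rw [← mul_assoc, c3, mul_assoc]
  have c5 : ((U : R) * ((U⁻¹ : Rˣ) : R)) = 1 := U.mul_inv
  have c5t : ∀ t : R, (U : R) * (((U⁻¹ : Rˣ) : R) * t) = t := fun t => by
    rw [← mul_assoc, c5, one_mul]
  have c6 : (((U⁻¹ : Rˣ) : R) * (U : R)) = 1 := U.inv_mul
  have c6t : ∀ t : R, ((U⁻¹ : Rˣ) : R) * ((U : R) * t) = t := fun t => by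
    rw [← mul_assoc, c6, one_mul]
  refine isUnit_iff_exists.mpr ⟨e * ((U⁻¹ : Rˣ) : R) + (1 - e * e), ?_, ?_⟩
  · simp only [mul_add, add_mul, mul_sub, sub_mul, mul_one, one_mul, mul_assoc,
      c1, c2, c3, c4, c5, c5t, c6, c6t, s3, s3t]
    abel
  · simp only [mul_add, add_mul, mul_sub, sub_mul, mul_one, one_mul, mul_assoc,
      c1, c2, c3, c4, c5, c5t, c6, c6t, s3, s3t]
    abel

/-- For a tripotent `e` commuting with `δ ∈ Δ(R)`, `e·δ² ∈ Δ(R)`. -/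
lemma trip_mul_sq {e δ : R} (he : e ^ 3 = e) (hδ : δ ∈ Delta R) (hc : e * δ = δ * e) :
    e * (δ * δ) ∈ Delta R := by
  have t1 : δ * e = e * δ := hc.symm
  have t2 : ∀ t : R, δ * (e * t) = e * (δ * t) := fun t => by rw [← mul_assoc, t1, mul_assoc]
  have h1 : IsUnit (1 + δ) := by
    have h := hδ 1 isUnit_one
    rwa [add_comm] at h
  have hcv : e * (1 + δ) = (1 + δ) * e := by
    simp only [mul_add, add_mul, mul_one, one_mul, t1]
  have g1 : IsUnit (e * (1 + δ) + (1 - e * e)) := glue_isUnit he h1 hcv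
  have g2 : IsUnit (e * 1 + (1 - e * e)) := glue_isUnit he isUnit_one (by rw [mul_one, one_mul])
  have A : δ * (e * (1 + δ) + (1 - e * e)) ∈ Delta R := delta_mul_unit hδ g1
  have B : δ * (e * 1 + (1 - e * e)) ∈ Delta R := delta_mul_unit hδ g2
  have key : e * (δ * δ) =
      δ * (e * (1 + δ) + (1 - e * e)) + -(δ * (e * 1 + (1 - e * e))) := by
    simp only [mul_add, add_mul, mul_sub, sub_mul, mul_one, one_mul, mul_assoc, t1, t2]
    abel
  rw [key]
  exact delta_add A (delta_neg B)

/-- For an idempotent `f` commuting with `δ ∈ Δ(R)`, in an SDT ring, `f·δ ∈ Δ(R)`. -/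
lemma idem_mul (hR : IsSDTRing R) {f δ : R} (hf : f * f = f) (hδ : δ ∈ Delta R)
    (hc : f * δ = δ * f) : f * δ ∈ Delta R := by
  have t1 : δ * f = f * δ := hc.symm
  have t2 : ∀ t : R, δ * (f * t) = f * (δ * t) := fun t => by rw [← mul_assoc, t1, mul_assoc]
  have t3 : ∀ t : R, f * (f * t) = f * t := fun t => by rw [← mul_assoc, hf]
  have hf3 : f ^ 3 = f := by
    calc f ^ 3 = f * (f * f) := by noncomm_ring
    _ = f := by rw [hf, hf]
  have hq : f * (δ * δ) ∈ Delta R := trip_mul_sq hf3 hδ hc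
  obtain ⟨ε, μ, hε3, hμ, hεμ, hxeq⟩ := hR (f * δ)
  have s1 : μ * ε = ε * μ := hεμ.symm
  have s2 : ∀ t : R, μ * (ε * t) = ε * (μ * t) := fun t => by rw [← mul_assoc, s1, mul_assoc]
  have s3 : ε * (ε * ε) = ε := by
    calc ε * (ε * ε) = ε ^ 3 := by noncomm_ring
    _ = ε := hε3
  have hxx : (f * δ) * (f * δ) = f * (δ * δ) := by
    simp only [mul_assoc, t1, t2, t3]
  have T1 : (f * δ) * ((f * δ) * (f * δ)) ∈ Delta R := by
    have h : (f * δ) * ((f * δ) * (f * δ)) = (f * (δ * δ)) * δ := by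
      simp only [mul_assoc, t1, t2, t3]
    rw [h]
    exact delta_mul hq hδ
  have T2 : μ * ((f * δ) * (f * δ)) ∈ Delta R := by
    rw [hxx]; exact delta_mul hμ hq
  have T3 : ε * (μ * μ) ∈ Delta R := trip_mul_sq hε3 hμ hεμ
  have T4 : μ * (μ * μ) ∈ Delta R := delta_mul hμ (delta_mul hμ hμ)
  have key : f * δ = (f * δ) * ((f * δ) * (f * δ))
      + (-(μ * ((f * δ) * (f * δ))) + -(μ * ((f * δ) * (f * δ))) + -(μ * ((f * δ) * (f * δ))))
      + (ε * (μ * μ) + ε * (μ * μ) + ε * (μ * μ))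
      + (μ * (μ * μ) + μ * (μ * μ)) + μ := by
    rw [hxeq]
    simp only [mul_add, add_mul, mul_assoc, s1, s2, s3]
    abel
  rw [key]
  exact delta_add (delta_add (delta_add (delta_add T1
    (delta_add (delta_add (delta_neg T2) (delta_neg T2)) (delta_neg T2)))
    (delta_add (delta_add T3 T3) T3)) (delta_add T4 T4)) hμ

end DeltaLemmas

theorem sub_pow_three_mem_delta {R : Type*} [Ring R] (hR : IsSDTRing R) (a : R) :
    a - a ^ 3 ∈ Delta R := by
  obtain ⟨e, d, he3, hd, hed, ha⟩ := hR a
  have t1 : d * e = e * d := hed.symm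
  have t2 : ∀ t : R, d * (e * t) = e * (d * t) := fun t => by rw [← mul_assoc, t1, mul_assoc]
  have s3 : e * (e * e) = e := by
    calc e * (e * e) = e ^ 3 := by noncomm_ring
    _ = e := he3
  have hf : (e * e) * (e * e) = e * e := by
    simp only [mul_assoc]; rw [s3]
  have hcf : (e * e) * d = d * (e * e) := by
    simp only [mul_assoc, t1, t2]
  have m2 : (e * e) * d ∈ Delta R := idem_mul hR hf hd hcf
  have m2' : e * (e * d) ∈ Delta R := by rw [← mul_assoc]; exact m2
  have m1 : e * (d * d) ∈ Delta R := trip_mul_sq he3 hd hed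
  have m3 : d * (d * d) ∈ Delta R := delta_mul hd (delta_mul hd hd)
  have key : a - a ^ 3 = d
      + (-(e * (e * d)) + -(e * (e * d)) + -(e * (e * d)))
      + (-(e * (d * d)) + -(e * (d * d)) + -(e * (d * d)))
      + -(d * (d * d)) := by
    rw [ha]
    have hpow : (e + d) ^ 3 = (e + d) * ((e + d) * (e + d)) := by noncomm_ring
    rw [hpow]
    simp only [mul_add, add_mul, mul_assoc, t1, t2, s3]
    abel
  rw [key]
  exact delta_add (delta_add (delta_add hd
    (delta_add (delta_add (delta_neg m2') (delta_neg m2')) (delta_neg m2')))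
    (delta_add (delta_add (delta_neg m1) (delta_neg m1)) (delta_neg m1)))
    (delta_neg m3)
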